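/- arXiv:2006.02330 — 3 statements merged into one kernel-verified Lean document; each statement's English description precedes it below -/
import Mathlib

section
/- Consider two modalities v and u with Hilbert spaces H^(v), H^(u) and, for a fixed class m, probability measures ν_m^(v), ν_m^(u) with bounded supports, independent across modalities; define η_{m,δ} = min over the two modalities of inf over the support of the measure of the ball B_δ(·). Suppose the training set contains N_m samples of class m with observations available in both modalities (i.i.d. within each modality), and the embedding {y_i^(v)}, {y_i^(u)} ⊂ ℝ^d satisfies: (P1) ‖y_i^(v) − y_i^(u)‖ ≤ η for all training samples x_i; (P2) ‖y_i^(v) − y_j^(v)‖ ≤ R_δ if ‖x_i^(v) − x_j^(v)‖ ≤ 2δ and likewise in modality u, whenever x_i, x_j have the same class; (P3) ‖y_i^(v) − y_j^(u)‖ > γ whenever x_i, x_j have different classes. Assume the interpolators f^(v): H^(v) → ℝ^d and f^(u): H^(u) → ℝ^d are Lipschitz with constant L, map training observations to their embeddings, and 6Lδ + 2√d·ε + 2R_δ + 2η ≤ γ holds for some ε > 0, δ > 0. If N_m > Q/η_{m,δ} for some Q ≥ 1, then for a query sample x^(v) ∼ ν_m^(v) of class m (independent of the training samples), with probability at least 1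 − exp(−2(N_m·η_{m,δ} − Q)²/N_m) − 2d·exp(−Q·ε²/(2L²δ²)) − (1 − η_{m,δ})^Q, the retrieval algorithm that returns the K training samples of modality u whose embeddings are nearest to f^(v)(x^(v)) achieves precision P = 1 if K ≤ Q and P ≥ Q/K if K > Q, and recall R = K/N_m if K ≤ Q and R ≥ Q/N_m if K > Q. -/
/-!
On the event that at least `Q` training samples of class `m` lie within `3δ` of the query in
modality `v`, retrieval succeeds deterministically: by Lipschitz continuity and (P1) their
`u`-embeddings are within `η + 3Lδ` of the query embedding, by (P3) every embedding of another
class is farther than `γ - 3Lδ`, and the margin condition puts the first radius below the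
second. So the `K` nearest items are either all of class `m` or contain these `Q` samples.

The support of the class-`m` law has a finite `2δ`-net, since disjoint `δ`-balls around a
separated set each carry mass at least `η_{m,δ}`. If the query is `2δ`-close to a net point `z`,
it suffices that `Q` samples fall into `ball z δ`; by Hoeffding's inequality this fails with
probability at most `exp(-2(N_m η_{m,δ} - Q)²/N_m)`, and Fubini over the independent query ends
the proof.
-/

open MeasureTheory ProbabilityTheory Metric Finset Real
open scoped ENNReal NNReal

lemma ciInf_ciInf_subtype_le {ι : Type*} [Finite ι] {β : ι → Type*} {S : ∀ i, Set (β i)}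
    {f : ∀ i, β i → ℝ} (hf : ∀ i x, 0 ≤ f i x) {i : ι} {x : β i} (hx : x ∈ S i) :
    ⨅ j, ⨅ y : S j, f j y ≤ f i x :=
  (ciInf_le (Set.finite_range _).bddBelow i).trans
    (ciInf_le (f := fun y : S i => f i y) ⟨0, by rintro _ ⟨y, rfl⟩; exact hf i y⟩ ⟨x, hx⟩)

lemma dist_lt_dist_of_dist_le_of_lt_dist {α : Type*} [PseudoMetricSpace α] {x y q z : α}
    {η r γ : ℝ} (hxy : dist x y ≤ η) (hxq : dist x q ≤ r) (hxz : γ < dist x z)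
    (h : η + 2 * r ≤ γ) : dist y q < dist z q := by
  linarith [dist_triangle y x q, dist_comm x y, dist_triangle x q z, dist_comm q z]

open Classical in
lemma measureReal_pi_le_sub_card_mem_le_exp {κ α : Type*} [Fintype κ] [MeasurableSpace α]
    (μ : Measure α) [IsProbabilityMeasure μ] {B : Set α} (hB : MeasurableSet B) {ε : ℝ}
    (hε : 0 ≤ ε) :
    (Measure.pi fun _ : κ => μ).real {z | ε ≤ Fintype.card κ * μ.real B - #{i | z i ∈ B}}
      ≤ exp (-(2 * ε ^ 2 / Fintype.card κ)) := by
  set ρ := Measure.pi fun _ : κ => μ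
  -- Hoeffding's inequality bounds upper tails, so it is applied to the negated indicators.
  set Y : κ → (κ → α) → ℝ := fun i z => -B.indicator 1 (z i)
  have hY_meas : ∀ i, Measurable (Y i) :=
    fun i => ((measurable_const.indicator hB).comp (measurable_pi_apply i)).neg
  have hY_mean : ∀ i, ρ[Y i] = -μ.real B := by
    intro i
    rw [integral_neg, ← integral_map (measurable_pi_apply i).aemeasurable
      (measurable_const.indicator hB).aestronglyMeasurable,
      (measurePreserving_eval (fun _ : κ => μ) i).map_eq, integral_indicator_one hB]
  have hY_subG :
      ∀ i, HasSubgaussianMGF (fun z => Y i z - ρ[Y i]) ((‖0 - (-1 : ℝ)‖₊ / 2) ^ 2) ρ :=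
    fun i => hasSubgaussianMGF_of_mem_Icc (hY_meas i).aemeasurable (ae_of_all _ fun z => by
      by_cases h : z i ∈ B <;> simp [Y, h])
  have hY_indep : iIndepFun (fun i z => Y i z - ρ[Y i]) ρ :=
    (iIndepFun_pi (X := fun _ x => -B.indicator 1 x) fun _ =>
      (measurable_const.indicator hB).neg.aemeasurable).comp (fun i y => y - ρ[Y i])
      fun _ => measurable_id.sub_const _
  have hsum : ∀ z, ∑ i, (Y i z - ρ[Y i]) = Fintype.card κ * μ.real B - #{i | z i ∈ B} := by
    intro z
    rw [sum_sub_distrib, sum_congr rfl fun i _ => hY_mean i]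
    simp only [Y, sum_neg_distrib, natCast_card_filter, Set.indicator_apply, Pi.one_apply,
      sum_const, card_univ, nsmul_eq_mul]
    ring
  have := HasSubgaussianMGF.measure_sum_ge_le_of_iIndepFun hY_indep (s := univ)
    (fun i _ => hY_subG i) hε
  simp only [hsum, sum_const, card_univ, nsmul_eq_mul] at this
  refine this.trans_eq (congrArg exp ?_)
  push_cast
  norm_num
  ring

open Classical in
lemma measure_pi_card_mem_le_le_exp {κ α : Type*} [Fintype κ] [MeasurableSpace α]
    (μ : Measure α) [IsProbabilityMeasure μ] {B : Set α} (hB : MeasurableSet B) {a q : ℝ}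
    (ha : a ≤ μ.real B) (hq : q ≤ Fintype.card κ * a) :
    Measure.pi (fun _ : κ => μ) {z | (#{i | z i ∈ B} : ℝ) ≤ q}
      ≤ ENNReal.ofReal (exp (-(2 * (Fintype.card κ * a - q) ^ 2 / Fintype.card κ))) := by
  have hsub : {z : κ → α | (#{i | z i ∈ B} : ℝ) ≤ q}
      ⊆ {z | Fintype.card κ * a - q ≤ Fintype.card κ * μ.real B - #{i | z i ∈ B}} :=
    fun z hz => by
      simp only [Set.mem_ofPred_eq] at hz ⊢
      linarith [mul_le_mul_of_nonneg_left ha (Nat.cast_nonneg (α := ℝ) (Fintype.card κ))]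
  rw [← ofReal_measureReal]
  exact ENNReal.ofReal_le_ofReal ((measureReal_mono hsub).trans
    (measureReal_pi_le_sub_card_mem_le_exp μ hB (by linarith)))

lemma card_mul_le_measure_univ_of_isSeparated {X : Type*} [PseudoMetricSpace X]
    [MeasurableSpace X] [OpensMeasurableSpace X] (μ : Measure X) {ε : ℝ≥0} {a : ℝ≥0∞} {F : Finset X}
    (hF : IsSeparated (2 * ε : ℝ≥0) (F : Set X)) (h : ∀ x ∈ F, a ≤ μ (ball x ε)) :
    #F * a ≤ μ Set.univ := by
  have hdisj : (F : Set X).PairwiseDisjoint fun x => ball x ε := by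
    intro x hx y hy hxy
    refine ball_disjoint_ball ?_
    have : ((2 * ε : ℝ≥0) : ℝ≥0∞) < edist x y := hF hx hy hxy
    rw [edist_nndist, ENNReal.coe_lt_coe, ← NNReal.coe_lt_coe] at this
    push_cast at this
    linarith
  calc #F * a = ∑ _x ∈ F, a := by rw [sum_const, nsmul_eq_mul]
    _ ≤ ∑ x ∈ F, μ (ball x ε) := sum_le_sum h
    _ = μ (⋃ x ∈ F, ball x ε) :=
      (measure_biUnion_finset hdisj fun _ _ => measurableSet_ball).symm
    _ ≤ μ Set.univ := measure_mono (Set.subset_univ _)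

lemma exists_finite_isCover_of_le_measure_ball {X : Type*} [PseudoMetricSpace X]
    [MeasurableSpace X] [OpensMeasurableSpace X] (μ : Measure X) [IsFiniteMeasure μ]
    {A : Set X} {ε : ℝ≥0} {a : ℝ≥0∞} (ha : a ≠ 0) (h : ∀ x ∈ A, a ≤ μ (ball x ε)) :
    ∃ N ⊆ A, N.Finite ∧ IsCover (2 * ε) A N := by
  obtain ⟨n, hn⟩ := ENNReal.exists_nat_mul_gt ha (measure_ne_top μ Set.univ)
  have hpacking : packingNumber (2 * ε) A ≤ n := by
    refine iSup₂_le fun C hCA => iSup_le fun hC => ?_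
    by_contra! hlt
    obtain ⟨t, htC, htcard⟩ := Set.exists_subset_encard_eq hlt.le
    have ht : t.Finite := Set.finite_of_encard_eq_coe htcard
    have hcard : #ht.toFinset = n := by
      rw [← Nat.cast_inj (R := ℕ∞), ← htcard, ht.encard_eq_coe_toFinset_card]
    refine (card_mul_le_measure_univ_of_isSeparated μ (F := ht.toFinset) ?_
      fun x hx => h x (hCA (htC (ht.mem_toFinset.1 hx)))).not_gt (hcard ▸ hn)
    simpa using hC.subset htC
  have hne : packingNumber (2 * ε) A ≠ ⊤ := ne_top_of_le_ne_top (by simp) hpacking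
  exact ⟨maximalSeparatedSet _ A, maximalSeparatedSet_subset,
    Set.encard_ne_top_iff.1 (encard_maximalSeparatedSet hne ▸ hne),
    isCover_maximalSeparatedSet hne⟩

open Classical in
lemma measurable_card_filter_mem {κ α : Type*} [Fintype κ] [MeasurableSpace α] {B : Set α}
    (hB : MeasurableSet B) : Measurable fun z : κ → α => #{i | z i ∈ B} := by
  simp_rw [card_filter]
  exact Finset.measurable_sum _ fun i _ =>
    Measurable.ite (hB.preimage (measurable_pi_apply i)) measurable_const measurable_const

lemma map_prod_eq_pi_prod_of_iIndepFun {Ω α κ : Type*} [MeasurableSpace Ω] [MeasurableSpace α]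
    [Fintype κ] {P : Measure Ω} [IsProbabilityMeasure P] {μ : Measure α}
    {Y : Option κ → Ω → α} (hY : ∀ o, Measurable (Y o)) (hindep : iIndepFun Y P)
    (hlaw : ∀ o, P.map (Y o) = μ) :
    P.map (fun ω => (fun i => Y (some i) ω, Y none ω)) = (Measure.pi fun _ : κ => μ).prod μ := by
  have : IsProbabilityMeasure μ :=
    hlaw none ▸ Measure.isProbabilityMeasure_map (hY none).aemeasurable
  have hpi : P.map (fun ω o => Y o ω) = Measure.pi fun _ => μ := by
    rw [(iIndepFun_iff_map_fun_eq_pi_map fun o => (hY o).aemeasurable).1 hindep]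
    simp_rw [hlaw]
  have hequiv := (MeasurableEquiv.map_apply_eq_iff_map_symm_apply_eq _).2
    (Measure.pi_map_piOptionEquivProd fun _ : Option κ => μ).symm
  rw [← hequiv, ← hpi, Measure.map_map (MeasurableEquiv.measurable _)
    (measurable_pi_lambda _ fun o => hY o)]
  rfl

lemma one_sub_le_prod_apply_of_ae_le {α β : Type*} [MeasurableSpace α] [MeasurableSpace β]
    {μ : Measure α} {ν : Measure β} [IsProbabilityMeasure μ] [IsProbabilityMeasure ν]
    {E : Set (α × β)} (hE : MeasurableSet E) {r : ℝ≥0∞}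
    (h : ∀ᵐ y ∂ν, μ {x | (x, y) ∉ E} ≤ r) :
    1 - r ≤ μ.prod ν E := by
  have hEc : μ.prod ν Eᶜ ≤ r := by
    rw [Measure.prod_apply_symm hE.compl]
    exact (lintegral_mono_ae h).trans_eq (by simp)
  calc 1 - r ≤ 1 - μ.prod ν Eᶜ := tsub_le_tsub_left hEc 1
    _ = μ.prod ν E := by
      rw [prob_compl_eq_one_sub hE, ENNReal.sub_sub_cancel ENNReal.one_ne_top prob_le_one]

lemma exists_measurableSet_subset_card_dist_lt {κ α : Type*} [Fintype κ] [PseudoMetricSpace α]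
    [MeasurableSpace α] [OpensMeasurableSpace α] (μ ν : Measure α) [IsProbabilityMeasure μ]
    [IsProbabilityMeasure ν] {S : Set α} (hS : ν Sᶜ = 0) {δ a : ℝ} {Q : ℕ} (hδ : 0 ≤ δ) (ha : 0 < a)
    (hball : ∀ y ∈ S, a ≤ μ.real (ball y δ)) (hQ : Q ≤ Fintype.card κ * a) :
    ∃ E, MeasurableSet E ∧ E ⊆ {p : (κ → α) × α | Q ≤ #{i | dist (p.1 i) p.2 < 3 * δ}} ∧
      1 - ENNReal.ofReal (exp (-(2 * (Fintype.card κ * a - Q) ^ 2 / Fintype.card κ)))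
        ≤ (Measure.pi (fun _ : κ => μ)).prod ν E := by
  classical
  lift δ to ℝ≥0 using hδ
  obtain ⟨N, hNS, hNfin, hcover⟩ := exists_finite_isCover_of_le_measure_ball μ (A := S)
    (ENNReal.ofReal_pos.2 ha).ne' fun y hy => ENNReal.ofReal_le_of_le_toReal (hball y hy)
  -- Discretising the query through the finite net `N` makes the event measurable for the
  -- product σ-algebra, which can be smaller than the Borel σ-algebra of `(κ → α) × α`.
  set G : α → Set (κ → α) := fun z => {zv | Q ≤ #{i | zv i ∈ ball z δ}}
  have hG : ∀ z, MeasurableSet (G z) := fun z =>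
    measurable_card_filter_mem measurableSet_ball measurableSet_Ici
  set E := ⋃ z ∈ N, G z ×ˢ closedBall z (2 * δ)
  have hE : MeasurableSet E :=
    hNfin.measurableSet_biUnion fun z _ => (hG z).prod measurableSet_closedBall
  refine ⟨E, hE, ?_, ?_⟩
  · simp only [E, Set.iUnion_subset_iff]
    rintro z - ⟨zv, y⟩ ⟨hzv, hy⟩
    refine hzv.trans (card_le_card fun i => ?_)
    simp only [mem_filter, mem_univ, true_and, mem_ball, mem_closedBall] at hy ⊢
    intro hi
    calc dist (zv i) y ≤ dist (zv i) z + dist z y := dist_triangle _ _ _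
      _ < δ + 2 * δ := add_lt_add_of_lt_of_le hi (by rwa [dist_comm])
      _ = 3 * δ := by ring
  refine one_sub_le_prod_apply_of_ae_le hE <| (ae_iff.2 hS).mono fun y hy => ?_
  obtain ⟨z, hzN, hyz⟩ := Set.mem_iUnion₂.1 (hcover.subset_iUnion_closedBall hy)
  refine (measure_mono fun zv hzv => ?_).trans
    (measure_pi_card_mem_le_le_exp μ measurableSet_ball (hball z (hNS hzN)) hQ)
  have : ¬ Q ≤ #{i | zv i ∈ ball z δ} := fun h =>
    hzv (Set.mem_biUnion hzN ⟨h, by simpa using hyz⟩)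
  simp only [Set.mem_ofPred_eq]
  exact_mod_cast (not_le.1 this).le

lemma one_sub_exp_le_measure_card_dist_lt {Ω κ α : Type*} [MeasurableSpace Ω] [Fintype κ]
    [PseudoMetricSpace α] [MeasurableSpace α] [OpensMeasurableSpace α] {P : Measure Ω}
    [IsProbabilityMeasure P] {μ : Measure α} {Y : Option κ → Ω → α} (hY : ∀ o, Measurable (Y o))
    (hindep : iIndepFun Y P) (hlaw : ∀ o, P.map (Y o) = μ) {S : Set α} (hS : μ Sᶜ = 0)
    {δ a : ℝ} {Q : ℕ} (hδ : 0 ≤ δ) (ha : 0 < a) (hball : ∀ y ∈ S, a ≤ μ.real (ball y δ))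
    (hQ : Q ≤ Fintype.card κ * a) :
    1 - ENNReal.ofReal (exp (-(2 * (Fintype.card κ * a - Q) ^ 2 / Fintype.card κ)))
      ≤ P {ω | Q ≤ #{i | dist (Y (some i) ω) (Y none ω) < 3 * δ}} := by
  have : IsProbabilityMeasure μ :=
    hlaw none ▸ Measure.isProbabilityMeasure_map (hY none).aemeasurable
  obtain ⟨E, hE, hEsub, hPE⟩ := exists_measurableSet_subset_card_dist_lt μ μ hS hδ ha hball hQ
  have hmeas : Measurable fun ω => (fun i => Y (some i) ω, Y none ω) :=
    (measurable_pi_lambda _ fun i => hY (some i)).prodMk (hY none)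
  calc _ ≤ _ := hPE
    _ = P ((fun ω => (fun i => Y (some i) ω, Y none ω)) ⁻¹' E) := by
      rw [← map_prod_eq_pi_prod_of_iIndepFun hY hindep hlaw, Measure.map_apply hmeas hE]
    _ ≤ _ := measure_mono fun ω hω => hEsub hω

section Retrieval

variable {ι : Type*} (p : ι → Prop) [DecidablePred p]

noncomputable def retrievalPrecision (A : Finset ι) : ℝ :=
  #(A.filter p) / (#(A.filter p) + #(A.filter fun i => ¬ p i))

noncomputable def retrievalRecall [Fintype ι] [DecidableEq ι] (A : Finset ι) : ℝ :=
  #(A.filter p) / (#(A.filter p) + #(univ.filter p \ A))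

lemma retrievalPrecision_eq (A : Finset ι) : retrievalPrecision p A = #(A.filter p) / #A := by
  rw [retrievalPrecision, ← Nat.cast_add, card_filter_add_card_filter_not]

lemma retrievalRecall_eq [Fintype ι] [DecidableEq ι] (A : Finset ι) :
    retrievalRecall p A = #(A.filter p) / #(univ.filter p) := by
  have : univ.filter p ∩ A = A.filter p := by ext; simp [and_comm]
  rw [retrievalRecall, ← Nat.cast_add, add_comm, ← this, card_sdiff_add_card_inter]

variable {p}

lemma min_card_le_card_filter_of_nearest {A T : Finset ι} {g : ι → ℝ}
    (hA : ∀ i ∈ A, ∀ j ∉ A, g i ≤ g j) (hT : ∀ i ∈ T, p i)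
    (hlt : ∀ i ∈ T, ∀ j, ¬ p j → g i < g j) :
    min #T #A ≤ #(A.filter p) := by
  by_cases hTA : T ⊆ A
  · exact min_le_of_left_le (card_le_card fun i hi => mem_filter.2 ⟨hTA hi, hT i hi⟩)
  · obtain ⟨s, hsT, hsA⟩ := not_subset.1 hTA
    refine min_le_of_right_le (card_le_card fun j hj => mem_filter.2 ⟨hj, ?_⟩)
    by_contra hpj
    exact (hA j hj s hsA).not_gt (hlt s hsT j hpj)

lemma retrievalPrecision_retrievalRecall_of_min_le [Fintype ι] [DecidableEq ι] {A : Finset ι}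
    {K Q : ℕ} (hA : #A = K) (hK : 1 ≤ K) (h : min Q K ≤ #(A.filter p)) :
    (K ≤ Q → retrievalPrecision p A = 1 ∧ retrievalRecall p A = K / #(univ.filter p)) ∧
      (Q < K → Q / K ≤ retrievalPrecision p A ∧ Q / #(univ.filter p) ≤ retrievalRecall p A) := by
  rw [retrievalPrecision_eq, retrievalRecall_eq, hA]
  constructor
  · intro hKQ
    have hcard : #(A.filter p) = K :=
      le_antisymm (hA ▸ card_filter_le A p) (min_eq_right hKQ ▸ h)
    rw [hcard, div_self (by positivity)]
    exact ⟨rfl, rfl⟩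
  · intro hQK
    have hcard : (Q : ℝ) ≤ #(A.filter p) := by exact_mod_cast min_eq_left hQK.le ▸ h
    exact ⟨div_le_div_of_nonneg_right hcard (by positivity),
      div_le_div_of_nonneg_right hcard (by positivity)⟩

lemma retrievalPrecision_retrievalRecall_of_nearest [Fintype ι] [DecidableEq ι] {A T : Finset ι}
    {g : ι → ℝ} {K Q : ℕ} (hA : #A = K) (hK : 1 ≤ K) (hnear : ∀ i ∈ A, ∀ j ∉ A, g i ≤ g j)
    (hT : ∀ i ∈ T, p i) (hlt : ∀ i ∈ T, ∀ j, ¬ p j → g i < g j) (hQT : Q ≤ #T) :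
    (K ≤ Q → retrievalPrecision p A = 1 ∧ retrievalRecall p A = K / #(univ.filter p)) ∧
      (Q < K → Q / K ≤ retrievalPrecision p A ∧ Q / #(univ.filter p) ≤ retrievalRecall p A) :=
  retrievalPrecision_retrievalRecall_of_min_le hA hK <|
    (min_le_min_right _ hQT).trans (hA ▸ min_card_le_card_filter_of_nearest hnear hT hlt)

end Retrieval

theorem crossmodal_retrieval_bound_general
    {Ω : Type*} [MeasurableSpace Ω] (P : Measure Ω) [IsProbabilityMeasure P]
    -- the two modalities `v` and `u`, each with its own Hilbert space
    (H : Fin 2 → Type*) [∀ w, NormedAddCommGroup (H w)]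
    [∀ w, MeasurableSpace (H w)]
    [∀ w, BorelSpace (H w)]
    (v u : Fin 2)
    -- the classes, with class-conditional probability measures in each modality
    {Λ : Type*} [DecidableEq Λ] (m : Λ)
    (ν : Λ → (w : Fin 2) → Measure (H w))
    (hν : ∀ l w, IsProbabilityMeasure (ν l w))
    (S : Λ → (w : Fin 2) → Set (H w))
    (hSsupp : ∀ l w, ν l w (S l w)ᶜ = 0)
    -- `η_{m,δ}`: minimum over the two modalities of the infimum over the support of
    -- class `m` of the measure of the `δ`-ball
    {d : ℕ} (δ ε η γ Rδ L ηmδ : ℝ)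
    (hδ : 0 < δ) (hε : 0 < ε) (hL : 0 < L)
    (hηmδ : ηmδ = ⨅ w : Fin 2, ⨅ x : S m w, ((ν m w) (ball (x : H w) δ)).toReal)
    -- the training samples, with their class labels; exactly `N_m` of them are of
    -- class `m`, and all observations are available in both modalities
    {ι : Type*} [Fintype ι] [DecidableEq ι] (c : ι → Λ)
    (Nm : ℕ) (hNm : (Finset.univ.filter (fun i => c i = m)).card = Nm)
    (X : (w : Fin 2) → ι → Ω → H w)
    (hXmeas : ∀ w i, Measurable (X w i))
    (hXdist : ∀ w i, Measure.map (X w i) P = ν (c i) w)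
    -- the query sample of class `m` observed in modality `v` (with its hypothetical
    -- observation in modality `u`), drawn independently of the training samples
    (x : (w : Fin 2) → Ω → H w)
    (hxmeas : ∀ w, Measurable (x w))
    (hxdist : ∀ w, Measure.map (x w) P = ν m w)
    -- all observations are mutually independent
    (hindep : iIndepFun
      (m := fun p : Fin 2 × Option ι => (inferInstance : MeasurableSpace (H p.1)))
      (fun p : Fin 2 × Option ι => p.2.elim (x p.1) (fun i => X p.1 i)) P)
    -- the interpolators, Lipschitz with constant `L`, defining the embedding
    (f : (w : Fin 2) → H w → EuclideanSpace ℝ (Fin d))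
    (hLip : ∀ w (a b : H w), ‖f w a - f w b‖ ≤ L * ‖a - b‖)
    -- (P1) cross-modal alignment of the training embeddings
    (hP1 : ∀ ω i, ‖f v (X v i ω) - f u (X u i ω)‖ ≤ η)
    -- (P2) within-class compactness, in each of the two modalities
    (hP2 : ∀ ω (w : Fin 2) i j, c i = c j → ‖X w i ω - X w j ω‖ ≤ 2 * δ →
      ‖f w (X w i ω) - f w (X w j ω)‖ ≤ Rδ)
    -- (P3) between-class separation
    (hP3 : ∀ ω i j, c i ≠ c j → γ < ‖f v (X v i ω) - f u (X u j ω)‖)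
    -- the margin condition
    (hmargin : 6 * L * δ + 2 * Real.sqrt d * ε + 2 * Rδ + 2 * η ≤ γ)
    -- enough training samples
    (Q : ℕ) (hNQ : (Q : ℝ) / ηmδ < Nm)
    -- the number of retrieved items
    (K : ℕ) (hK : 1 ≤ K) :
    ENNReal.ofReal
        (1 - Real.exp (-(2 * ((Nm : ℝ) * ηmδ - Q) ^ 2 / Nm))
           - 2 * d * Real.exp (-(Q * ε ^ 2 / (2 * L ^ 2 * δ ^ 2)))
           - (1 - ηmδ) ^ Q)
      ≤ P {ω | ∀ A : Finset ι, A.card = K →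
            -- `A` consists of `K` training samples of modality `u` whose embeddings
            -- are nearest to the embedding of the query
            (∀ i ∈ A, ∀ j ∉ A,
              ‖f u (X u i ω) - f v (x v ω)‖ ≤ ‖f u (X u j ω) - f v (x v ω)‖) →
            -- precision `P = TP/(TP+FP)` and recall `R = TP/(TP+FN)`
            ((K ≤ Q →
              ((A.filter (fun i => c i = m)).card : ℝ) /
                  ((A.filter (fun i => c i = m)).card
                    + (A.filter (fun i => ¬ c i = m)).card) = 1 ∧
              ((A.filter (fun i => c i = m)).card : ℝ) /
                  ((A.filter (fun i => c i = m)).card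
                    + ((Finset.univ.filter (fun i => c i = m)) \ A).card)
                = (K : ℝ) / Nm) ∧
            (Q < K →
              (Q : ℝ) / K ≤ ((A.filter (fun i => c i = m)).card : ℝ) /
                  ((A.filter (fun i => c i = m)).card
                    + (A.filter (fun i => ¬ c i = m)).card) ∧
              (Q : ℝ) / Nm ≤ ((A.filter (fun i => c i = m)).card : ℝ) /
                  ((A.filter (fun i => c i = m)).card
                    + ((Finset.univ.filter (fun i => c i = m)) \ A).card)))} := by
  set r := Real.exp (-(2 * ((Nm : ℝ) * ηmδ - Q) ^ 2 / Nm))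
  have hs : 0 ≤ 2 * d * Real.exp (-(Q * ε ^ 2 / (2 * L ^ 2 * δ ^ 2))) := by positivity
  rcases le_or_gt ηmδ 0 with hη0 | hη0
  · have : 1 ≤ (1 - ηmδ) ^ Q := one_le_pow₀ (by linarith)
    rw [ENNReal.ofReal_eq_zero.2 (by linarith [exp_pos (-(2 * ((Nm : ℝ) * ηmδ - Q) ^ 2 / Nm))])]
    exact zero_le
  have := hν m v
  have hball : ∀ y ∈ S m v, ηmδ ≤ (ν m v).real (ball y δ) := fun y hy => by
    rw [hηmδ]
    exact ciInf_ciInf_subtype_le (f := fun w y => ((ν m w) (ball y δ)).toReal)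
      (fun _ _ => ENNReal.toReal_nonneg) hy
  obtain ⟨y₀, hy₀⟩ : (S m v).Nonempty :=
    Set.nonempty_iff_ne_empty.2 fun h => by simpa [h] using hSsupp m v
  have hη1 : ηmδ ≤ 1 := (hball y₀ hy₀).trans measureReal_le_one
  set κ := {i // c i = m}
  have hκ : (Fintype.card κ : ℝ) = Nm := by rw [Fintype.card_subtype, hNm]
  have hQ : (Q : ℝ) ≤ Fintype.card κ * ηmδ := by rw [hκ]; exact ((div_lt_iff₀ hη0).1 hNQ).le
  set Y : Option κ → Ω → H v := fun o => (o.map Subtype.val).elim (x v) (X v)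
  have hnear := one_sub_exp_le_measure_card_dist_lt (Y := Y)
    (by rintro (_ | i); exacts [hxmeas v, hXmeas v i])
    (hindep.precomp (g := fun o : Option κ => (v, o.map Subtype.val))
      fun o o' h => Option.map_injective Subtype.val_injective (congrArg Prod.snd h))
    (by rintro (_ | i); exacts [hxdist v, (hXdist v i).trans (congrArg (ν · v) i.2)])
    (hSsupp m v) hδ.le hη0 hball hQ
  rw [hκ] at hnear
  have hsep : ∀ ω (i : κ) j, dist (X v i ω) (x v ω) < 3 * δ → ¬ c j = m →
      ‖f u (X u i ω) - f v (x v ω)‖ < ‖f u (X u j ω) - f v (x v ω)‖ := by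
    intro ω i j hi hj
    have hη : 0 ≤ η := (norm_nonneg _).trans (hP1 ω i)
    have hRδ : 0 ≤ Rδ := (norm_nonneg _).trans (hP2 ω v i i rfl (by simp; positivity))
    simp only [← dist_eq_norm] at hP1 hP3 hLip ⊢
    refine dist_lt_dist_of_dist_le_of_lt_dist (hP1 ω i)
      ((hLip v _ _).trans (mul_le_mul_of_nonneg_left hi.le hL.le))
      (hP3 ω i j (by rwa [i.2, ne_comm])) ?_
    nlinarith [Real.sqrt_nonneg d]
  calc ENNReal.ofReal (1 - r - _ - (1 - ηmδ) ^ Q) ≤ ENNReal.ofReal (1 - r) :=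
        ENNReal.ofReal_le_ofReal (by linarith [pow_nonneg (sub_nonneg.2 hη1) Q])
    _ = 1 - ENNReal.ofReal r := by rw [ENNReal.ofReal_sub _ (exp_pos _).le, ENNReal.ofReal_one]
    _ ≤ _ := hnear
    _ ≤ _ := measure_mono ?_
  intro ω hω A hA hAnear
  have := retrievalPrecision_retrievalRecall_of_nearest (p := (c · = m)) (Q := Q) hA hK hAnear
    (T := (univ.filter fun i : κ => dist (X v i ω) (x v ω) < 3 * δ).map (.subtype _))
    (by simp) (by simpa using fun i hi hci j => hsep ω ⟨i, hci⟩ j hi)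
    (by rw [card_map]; exact hω)
  rw [hNm] at this
  exact this

/-- Theorem 2 of the paper: cross-modal retrieval with a supervised
embedding. Under cross-modal alignment (P1), within-class compactness (P2),
between-class separation (P3), Lipschitz regularity of the interpolators, the margin
condition `6Lδ + 2√d·ε + 2R_δ + 2η ≤ γ`, and `N_m > Q/η_{m,δ}`, for a query sample of
class `m` observed in modality `v`, with probability at least
`1 − exp(−2(N_m η_{m,δ} − Q)²/N_m) − 2d exp(−Qε²/(2L²δ²)) − (1 − η_{m,δ})^Q`, any set
of `K` training samples of modality `u` whose embeddings are nearest to the query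
embedding achieves precision `P = 1` and recall `R = K/N_m` if `K ≤ Q`, and
`P ≥ Q/K` and `R ≥ Q/N_m` if `K > Q`. -/
theorem crossmodal_retrieval_bound
    {Ω : Type*} [MeasurableSpace Ω] (P : Measure Ω) [IsProbabilityMeasure P]
    -- the two modalities `v` and `u`, each with its own Hilbert space
    (H : Fin 2 → Type*) [∀ w, NormedAddCommGroup (H w)]
    [∀ w, InnerProductSpace ℝ (H w)] [∀ w, MeasurableSpace (H w)]
    [∀ w, BorelSpace (H w)]
    (v u : Fin 2) (hvu : v ≠ u)
    -- the classes, with class-conditional probability measures in each modality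
    {Λ : Type*} [DecidableEq Λ] (m : Λ)
    (ν : Λ → (w : Fin 2) → Measure (H w))
    (hν : ∀ l w, IsProbabilityMeasure (ν l w))
    -- the measures have bounded supports
    (S : Λ → (w : Fin 2) → Set (H w))
    (hSbdd : ∀ l w, Bornology.IsBounded (S l w))
    (hSsupp : ∀ l w, ν l w (S l w)ᶜ = 0)
    -- `η_{m,δ}`: minimum over the two modalities of the infimum over the support of
    -- class `m` of the measure of the `δ`-ball
    {d : ℕ} (δ ε η γ Rδ L ηmδ : ℝ)
    (hδ : 0 < δ) (hε : 0 < ε) (hL : 0 < L)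
    (hηmδ : ηmδ = ⨅ w : Fin 2, ⨅ x : S m w, ((ν m w) (ball (x : H w) δ)).toReal)
    -- the training samples, with their class labels; exactly `N_m` of them are of
    -- class `m`, and all observations are available in both modalities
    {ι : Type*} [Fintype ι] [DecidableEq ι] (c : ι → Λ)
    (Nm : ℕ) (hNm : (Finset.univ.filter (fun i => c i = m)).card = Nm)
    (X : (w : Fin 2) → ι → Ω → H w)
    (hXmeas : ∀ w i, Measurable (X w i))
    (hXdist : ∀ w i, Measure.map (X w i) P = ν (c i) w)
    -- the query sample of class `m` observed in modality `v` (with its hypothetical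
    -- observation in modality `u`), drawn independently of the training samples
    (x : (w : Fin 2) → Ω → H w)
    (hxmeas : ∀ w, Measurable (x w))
    (hxdist : ∀ w, Measure.map (x w) P = ν m w)
    -- all observations are mutually independent
    (hindep : iIndepFun
      (m := fun p : Fin 2 × Option ι => (inferInstance : MeasurableSpace (H p.1)))
      (fun p : Fin 2 × Option ι => p.2.elim (x p.1) (fun i => X p.1 i)) P)
    -- the interpolators, Lipschitz with constant `L`, defining the embedding
    (f : (w : Fin 2) → H w → EuclideanSpace ℝ (Fin d))
    (hLip : ∀ w (a b : H w), ‖f w a - f w b‖ ≤ L * ‖a - b‖)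
    -- (P1) cross-modal alignment of the training embeddings
    (hP1 : ∀ ω i, ‖f v (X v i ω) - f u (X u i ω)‖ ≤ η)
    -- (P2) within-class compactness, in each of the two modalities
    (hP2 : ∀ ω (w : Fin 2) i j, c i = c j → ‖X w i ω - X w j ω‖ ≤ 2 * δ →
      ‖f w (X w i ω) - f w (X w j ω)‖ ≤ Rδ)
    -- (P3) between-class separation
    (hP3 : ∀ ω i j, c i ≠ c j → γ < ‖f v (X v i ω) - f u (X u j ω)‖)
    -- the margin condition
    (hmargin : 6 * L * δ + 2 * Real.sqrt d * ε + 2 * Rδ + 2 * η ≤ γ)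
    -- enough training samples
    (Q : ℕ) (hQ : 1 ≤ Q) (hNQ : (Q : ℝ) / ηmδ < Nm)
    -- the number of retrieved items
    (K : ℕ) (hK : 1 ≤ K) :
    ENNReal.ofReal
        (1 - Real.exp (-(2 * ((Nm : ℝ) * ηmδ - Q) ^ 2 / Nm))
           - 2 * d * Real.exp (-(Q * ε ^ 2 / (2 * L ^ 2 * δ ^ 2)))
           - (1 - ηmδ) ^ Q)
      ≤ P {ω | ∀ A : Finset ι, A.card = K →
            -- `A` consists of `K` training samples of modality `u` whose embeddings
            -- are nearest to the embedding of the query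
            (∀ i ∈ A, ∀ j ∉ A,
              ‖f u (X u i ω) - f v (x v ω)‖ ≤ ‖f u (X u j ω) - f v (x v ω)‖) →
            -- precision `P = TP/(TP+FP)` and recall `R = TP/(TP+FN)`
            ((K ≤ Q →
              ((A.filter (fun i => c i = m)).card : ℝ) /
                  ((A.filter (fun i => c i = m)).card
                    + (A.filter (fun i => ¬ c i = m)).card) = 1 ∧
              ((A.filter (fun i => c i = m)).card : ℝ) /
                  ((A.filter (fun i => c i = m)).card
                    + ((Finset.univ.filter (fun i => c i = m)) \ A).card)
                = (K : ℝ) / Nm) ∧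
            (Q < K →
              (Q : ℝ) / K ≤ ((A.filter (fun i => c i = m)).card : ℝ) /
                  ((A.filter (fun i => c i = m)).card
                    + (A.filter (fun i => ¬ c i = m)).card) ∧
              (Q : ℝ) / Nm ≤ ((A.filter (fun i => c i = m)).card : ℝ) /
                  ((A.filter (fun i => c i = m)).card
                    + ((Finset.univ.filter (fun i => c i = m)) \ A).card)))} :=
  crossmodal_retrieval_bound_general P H v u m ν hν S hSsupp δ ε η γ Rδ L ηmδ hδ hε hL hηmδ c Nm hNm
    X hXmeas hXdist x hxmeas hxdist hindep f hLip hP1 hP2 hP3 hmargin Q hNQ K hK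
end

section
/- Let H be a Hilbert space, x ∈ H, δ > 0, and let f: H → ℝ^d be Lipschitz continuous with constant L. Let z₁, …, z_n be i.i.d. random samples drawn from a probability measure on H whose support is contained in the ball B_δ(x) of radius δ about x. Then for any ε > 0, with probability at least 1 − 2d·exp(−n·ε²/(2L²δ²)), the deviation of f(x) from the sample mean of the embedded samples is bounded as ‖f(x) − (1/n)·Σ_{i=1}^n f(z_i)‖ ≤ Lδ + √d·ε. -/
/-!
The bound holds for a deterministic reason: almost surely every sample lies in `B_δ(x)`, so by
the Lipschitz bound every `f (z i)` lies in the closed ball of radius `Lδ` about `f x`, and by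
convexity so does their mean. The event therefore has probability one whenever `n > 0`. For
`n = 0` the claimed lower bound `1 - 2d` is nonpositive unless `d = 0`, in which case the
target space is trivial.
-/

open MeasureTheory ProbabilityTheory Metric

theorem Convex.inv_card_smul_sum_mem {E : Type*} [AddCommGroup E] [Module ℝ E] {s : Set E}
    (hs : Convex ℝ s) {ι : Type*} [Fintype ι] [Nonempty ι] {y : ι → E} (hy : ∀ i, y i ∈ s) :
    (Fintype.card ι : ℝ)⁻¹ • ∑ i, y i ∈ s := by
  rw [Finset.smul_sum]
  refine hs.sum_mem (fun _ _ => by positivity) ?_ fun i _ => hy i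
  simp [Finset.card_univ, Fintype.card_ne_zero]

theorem ae_forall_mem_of_map_eq {Ω E ι : Type*} [MeasurableSpace Ω] [MeasurableSpace E]
    [Countable ι] {P : Measure Ω} {μ : Measure E} [NeZero μ] {z : ι → Ω → E} {s : Set E}
    (hdist : ∀ i, P.map (z i) = μ) (hs : μ sᶜ = 0) :
    ∀ᵐ ω ∂P, ∀ i, z i ω ∈ s := by
  refine ae_all_iff.2 fun i => ?_
  have hz : AEMeasurable (z i) P := aemeasurable_of_map_neZero (by rw [hdist i]; infer_instance)
  exact ae_of_ae_map hz (by rwa [hdist i])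

theorem prob_eq_one_of_mem_ae {Ω : Type*} [MeasurableSpace Ω] {P : Measure Ω}
    [IsProbabilityMeasure P] {s : Set Ω} (h : s ∈ ae P) : P s = 1 := by
  rw [measure_congr (ae_eq_univ.2 h), measure_univ]

theorem norm_sub_inv_card_smul_sum_le {E : Type*} [SeminormedAddCommGroup E] [NormedSpace ℝ E]
    {ι : Type*} [Fintype ι] [Nonempty ι] {c : E} {r : ℝ} {y : ι → E}
    (hy : ∀ i, ‖c - y i‖ ≤ r) :
    ‖c - (Fintype.card ι : ℝ)⁻¹ • ∑ i, y i‖ ≤ r := by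
  have hmem := (convex_closedBall c r).inv_card_smul_sum_mem (y := y)
    fun i => by rw [mem_closedBall, dist_comm, dist_eq_norm]; exact hy i
  rwa [mem_closedBall, dist_comm, dist_eq_norm] at hmem

theorem lipschitz_embedding_sample_mean_deviation_general
    {H : Type*} [NormedAddCommGroup H]
    [MeasurableSpace H]
    (x : H) (δ : ℝ) (hδ : 0 < δ)
    {d : ℕ} (f : H → EuclideanSpace ℝ (Fin d)) (L : ℝ) (hL : 0 < L)
    (hf : ∀ a b : H, ‖f a - f b‖ ≤ L * ‖a - b‖)
    {Ω : Type*} [MeasurableSpace Ω] (P : Measure Ω) [IsProbabilityMeasure P]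
    (n : ℕ) (z : Fin n → Ω → H)
    (μ : Measure H) [IsProbabilityMeasure μ]
    (hsupp : μ (ball x δ)ᶜ = 0)
    (hdist : ∀ i, Measure.map (z i) P = μ)
    (ε : ℝ) (hε : 0 < ε) :
    ENNReal.ofReal (1 - 2 * d * Real.exp (-(n * ε ^ 2 / (2 * L ^ 2 * δ ^ 2))))
      ≤ P {ω | ‖f x - (n : ℝ)⁻¹ • ∑ i, f (z i ω)‖ ≤ L * δ + Real.sqrt d * ε} := by
  have hbound : ENNReal.ofReal (1 - 2 * d * Real.exp (-(n * ε ^ 2 / (2 * L ^ 2 * δ ^ 2)))) ≤ 1 :=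
    ENNReal.ofReal_le_one.2 (sub_le_self _ (by positivity))
  obtain rfl | hd := Nat.eq_zero_or_pos d
  · have hevent (ω : Ω) :
        ‖f x - (n : ℝ)⁻¹ • ∑ i, f (z i ω)‖ ≤ L * δ + Real.sqrt ((0 : ℕ) : ℝ) * ε := by
      rw [Subsingleton.elim (f x - _) 0, norm_zero]; positivity
    rwa [prob_eq_one_of_mem_ae (Filter.Eventually.of_forall hevent)]
  obtain rfl | hn := Nat.eq_zero_or_pos n
  · rw [ENNReal.ofReal_eq_zero.2 (by norm_num; linarith [(Nat.one_le_cast.2 hd : (1 : ℝ) ≤ d)])]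
    exact zero_le
  have : Nonempty (Fin n) := ⟨⟨0, hn⟩⟩
  have hsample (a : H) (ha : a ∈ ball x δ) : ‖f x - f a‖ ≤ L * δ :=
    (hf x a).trans (mul_le_mul_of_nonneg_left
      (by rw [← dist_eq_norm, dist_comm]; exact ha.le) hL.le)
  have hae : ∀ᵐ ω ∂P, ‖f x - (n : ℝ)⁻¹ • ∑ i, f (z i ω)‖ ≤ L * δ := by
    filter_upwards [ae_forall_mem_of_map_eq hdist hsupp] with ω hball
    simpa using norm_sub_inv_card_smul_sum_le fun i => hsample (z i ω) (hball i)
  rwa [prob_eq_one_of_mem_ae (hae.mono fun ω hω => hω.trans (le_add_of_nonneg_right (by positivity)))]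

/-- If `f : H → ℝ^d` is `L`-Lipschitz and `z₁, …, z_n` are i.i.d. samples
from a probability measure supported in the ball `B_δ(x)`, then with probability at
least `1 − 2d·exp(−nε²/(2L²δ²))` the deviation of `f x` from the sample mean of the
embedded samples is at most `Lδ + √d·ε`. -/
theorem lipschitz_embedding_sample_mean_deviation
    {H : Type*} [NormedAddCommGroup H] [InnerProductSpace ℝ H]
    [MeasurableSpace H] [BorelSpace H]
    (x : H) (δ : ℝ) (hδ : 0 < δ)
    {d : ℕ} (f : H → EuclideanSpace ℝ (Fin d)) (L : ℝ) (hL : 0 < L)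
    (hf : ∀ a b : H, ‖f a - f b‖ ≤ L * ‖a - b‖)
    {Ω : Type*} [MeasurableSpace Ω] (P : Measure Ω) [IsProbabilityMeasure P]
    (n : ℕ) (z : Fin n → Ω → H)
    (hzmeas : ∀ i, Measurable (z i))
    (μ : Measure H) [IsProbabilityMeasure μ]
    (hsupp : μ (ball x δ)ᶜ = 0)
    (hdist : ∀ i, Measure.map (z i) P = μ)
    (hiid : iIndepFun z P)
    (ε : ℝ) (hε : 0 < ε) :
    ENNReal.ofReal (1 - 2 * d * Real.exp (-(n * ε ^ 2 / (2 * L ^ 2 * δ ^ 2))))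
      ≤ P {ω | ‖f x - (n : ℝ)⁻¹ • ∑ i, f (z i ω)‖ ≤ L * δ + Real.sqrt d * ε} :=
  lipschitz_embedding_sample_mean_deviation_general x δ hδ f L hL hf P n z μ hsupp hdist ε hε
end

section
/- Let x₁, …, x_N ∈ ℝ^n, σ > 0, and C ∈ ℝ^{N×d}. Define f: ℝ^n → ℝ^d componentwise by f_k(x) = Σ_{i=1}^N C_{ik}·exp(−‖x − x_i‖²/σ²) for k = 1, …, d. Then f is Lipschitz continuous with constant L = √2·e^{−1/2}·√N·σ^{−1}·‖C‖_F, i.e., ‖f(x) − f(x')‖ ≤ √2·e^{−1/2}·√N·σ^{−1}·‖C‖_F·‖x − x'‖ for all x, x' ∈ ℝ^n. -/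
/-!
Each Gaussian bump `p ↦ exp (-‖p - xᵢ‖² / σ²)` is a radial profile composed with the
1-Lipschitz map `p ↦ ‖p - xᵢ‖`, and the profile `t ↦ exp (-t² / σ²)` has slope at most
`max_s 2 s e^{-s²} / σ = √2 e^{-1/2} / σ`, attained at `s = 1/√2`. So the `N` bump differences are
each bounded by `√2 e^{-1/2} σ⁻¹ ‖p - q‖`, and Cauchy–Schwarz in each output coordinate turns
them into the Frobenius norm of `C` times `√N` times that bound.
-/

open Real Finset Matrix

lemma two_mul_mul_exp_neg_sq_le (s : ℝ) : 2 * s * exp (-s ^ 2) ≤ √2 * exp (-(1 / 2)) := by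
  -- `√2 (s² + 1/2) - 2 s = √2 (s - 1/√2)²`, and `1 + u ≤ eᵘ` at `u = s² - 1/2`; both are tight
  -- at the maximiser `s = 1/√2`.
  have htangent : 2 * s ≤ √2 * (s ^ 2 + 1 / 2) := by
    nlinarith [sq_nonneg (√2 * s - 1), sq_sqrt (zero_le_two : (0 : ℝ) ≤ 2), sqrt_nonneg 2]
  have hexp : s ^ 2 + 1 / 2 ≤ exp (s ^ 2 - 1 / 2) := by
    linarith [add_one_le_exp (s ^ 2 - 1 / 2)]
  calc 2 * s * exp (-s ^ 2)
      ≤ √2 * exp (s ^ 2 - 1 / 2) * exp (-s ^ 2) :=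
        mul_le_mul_of_nonneg_right (htangent.trans (by gcongr)) (exp_pos _).le
    _ = √2 * exp (-(1 / 2)) := by rw [mul_assoc, ← exp_add]; ring_nf

lemma abs_exp_neg_sq_sub_exp_neg_sq_le (a b : ℝ) :
    |exp (-a ^ 2) - exp (-b ^ 2)| ≤ √2 * exp (-(1 / 2)) * |a - b| := by
  have hderiv : ∀ t : ℝ, HasDerivAt (fun u ↦ exp (-u ^ 2)) (-(2 * t) * exp (-t ^ 2)) t := by
    intro t
    simpa [mul_comm] using ((hasDerivAt_pow 2 t).fun_neg).exp
  have hslope : ∀ t : ℝ, ‖-(2 * t) * exp (-t ^ 2)‖ ≤ √2 * exp (-(1 / 2)) := by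
    intro t
    rw [norm_mul, norm_neg, norm_mul, norm_eq_abs, norm_eq_abs, norm_eq_abs, abs_two,
      abs_of_pos (exp_pos _), ← sq_abs t]
    exact two_mul_mul_exp_neg_sq_le |t|
  have := Convex.norm_image_sub_le_of_norm_deriv_le
    (fun t _ ↦ (hderiv t).differentiableAt) (fun t _ ↦ (hderiv t).deriv ▸ hslope t)
    convex_univ (Set.mem_univ b) (Set.mem_univ a)
  simpa [norm_eq_abs] using this

lemma abs_gaussian_sub_gaussian_le {E : Type*} [SeminormedAddCommGroup E] {σ : ℝ} (hσ : 0 < σ)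
    (c p q : E) :
    |exp (-‖p - c‖ ^ 2 / σ ^ 2) - exp (-‖q - c‖ ^ 2 / σ ^ 2)|
      ≤ √2 * exp (-(1 / 2)) / σ * ‖p - q‖ := by
  have hscale : ∀ r : ℝ, -r ^ 2 / σ ^ 2 = -(r / σ) ^ 2 := fun r ↦ by rw [div_pow, neg_div]
  have hdist : |‖p - c‖ - ‖q - c‖| ≤ ‖p - q‖ := by
    simpa using abs_norm_sub_norm_le (p - c) (q - c)
  rw [hscale, hscale]
  calc _ ≤ √2 * exp (-(1 / 2)) * |‖p - c‖ / σ - ‖q - c‖ / σ| :=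
        abs_exp_neg_sq_sub_exp_neg_sq_le _ _
    _ = √2 * exp (-(1 / 2)) / σ * |‖p - c‖ - ‖q - c‖| := by
        rw [← sub_div, abs_div, abs_of_pos hσ]; ring
    _ ≤ _ := by gcongr

lemma norm_toLp_vecMul_le {ι κ : Type*} [Fintype ι] [Fintype κ] (v : ι → ℝ) (C : Matrix ι κ ℝ) :
    ‖WithLp.toLp 2 (v ᵥ* C)‖ ≤ √(∑ i, ∑ k, C i k ^ 2) * √(∑ i, v i ^ 2) := by
  rw [EuclideanSpace.norm_eq, ← sqrt_mul (by positivity)]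
  gcongr
  calc ∑ k, ‖(v ᵥ* C) k‖ ^ 2
      = ∑ k, (∑ i, C i k * v i) ^ 2 := by
        simp only [norm_eq_abs, sq_abs, vecMul, dotProduct, mul_comm]
    _ ≤ ∑ k, (∑ i, C i k ^ 2) * ∑ i, v i ^ 2 := by
        gcongr with k; exact sum_mul_sq_le_sq_mul_sq _ _ _
    _ = (∑ i, ∑ k, C i k ^ 2) * ∑ i, v i ^ 2 := by rw [← sum_mul, sum_comm]

lemma sqrt_sum_sq_le_sqrt_card_mul {ι : Type*} [Fintype ι] {v : ι → ℝ} {M : ℝ} (hM : 0 ≤ M)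
    (hv : ∀ i, |v i| ≤ M) : √(∑ i, v i ^ 2) ≤ √(Fintype.card ι) * M := by
  calc √(∑ i, v i ^ 2) ≤ √(∑ _i : ι, M ^ 2) :=
        sqrt_le_sqrt <| sum_le_sum fun i _ ↦ sq_le_sq' (abs_le.mp (hv i)).1 (abs_le.mp (hv i)).2
    _ = √(Fintype.card ι) * M := by
        rw [sum_const, card_univ, nsmul_eq_mul, sqrt_mul (Nat.cast_nonneg _), sqrt_sq hM]

/-- A Gaussian RBF interpolator with kernel centers `x i`, scale `σ`
and coefficient matrix `C` is Lipschitz with constant `√2·e^{−1/2}·√N·σ⁻¹·‖C‖_F`,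
where `‖C‖_F` is the Frobenius norm of `C`. -/
theorem rbf_interpolator_lipschitz
    {n d N : ℕ} (x : Fin N → EuclideanSpace ℝ (Fin n)) (σ : ℝ) (hσ : 0 < σ)
    (C : Matrix (Fin N) (Fin d) ℝ)
    (f : EuclideanSpace ℝ (Fin n) → EuclideanSpace ℝ (Fin d))
    (hf : ∀ (p : EuclideanSpace ℝ (Fin n)) (k : Fin d),
      f p k = ∑ i, C i k * Real.exp (-‖p - x i‖ ^ 2 / σ ^ 2)) :
    ∀ p q : EuclideanSpace ℝ (Fin n),
      ‖f p - f q‖ ≤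
        Real.sqrt 2 * Real.exp (-(1 / 2 : ℝ)) * Real.sqrt N * σ⁻¹ *
          Real.sqrt (∑ i, ∑ k, (C i k) ^ 2) * ‖p - q‖ := by
  intro p q
  set Δ : Fin N → ℝ := fun i ↦ exp (-‖p - x i‖ ^ 2 / σ ^ 2) - exp (-‖q - x i‖ ^ 2 / σ ^ 2)
  have hdiff : f p - f q = WithLp.toLp 2 (Δ ᵥ* C) := by
    ext k
    simp only [WithLp.ofLp_sub, Pi.sub_apply, hf, vecMul, dotProduct, Δ, mul_sub, sum_sub_distrib,
      mul_comm]
  have hΔ : ∀ i, |Δ i| ≤ √2 * exp (-(1 / 2)) / σ * ‖p - q‖ :=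
    fun i ↦ abs_gaussian_sub_gaussian_le hσ (x i) p q
  calc ‖f p - f q‖ ≤ √(∑ i, ∑ k, C i k ^ 2) * √(∑ i, Δ i ^ 2) :=
        hdiff ▸ norm_toLp_vecMul_le Δ C
    _ ≤ √(∑ i, ∑ k, C i k ^ 2) * (√N * (√2 * exp (-(1 / 2)) / σ * ‖p - q‖)) := by
        gcongr
        simpa using sqrt_sum_sq_le_sqrt_card_mul (by positivity) hΔ
    _ = _ := by ring
end
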